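/- Proposition (d-fold convolution, general a and b): let a, b ≥ 1 be integers, let c : ℕ → ℚ be a sequence, and define p̂(m,ℓ) := (1/(am+(b−1)ℓ+1))·C(am+(b−1)ℓ+1, ℓ)·P_c(m,ℓ) for m, ℓ ∈ ℕ. Then for all integers d ≥ 1 and all n, k ∈ ℕ, ∑ p̂(m_1,ℓ_1)···p̂(m_d,ℓ_d) = (d/(an+(b−1)k+d))·C(an+(b−1)k+d, k)·P_c(n,k), where the sum ranges over all d-tuples (ℓ_1,…,ℓ_d) of nonnegative integers with ℓ_1+⋯+ℓ_d = k and all d-tuples (m_1,…,m_d) of nonnegative integers with m_1+⋯+m_d = n. -/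

import Mathlib

/-- Weighted composition sum `P_c(n,k) = ∑ c_{m_1}⋯c_{m_k}` over compositions of `n`
into `k` positive parts; equals `(k!/n!)·B_{n,k}(1!c_1, 2!c_2, …)`. -/
def Pc (c : ℕ → ℚ) (n k : ℕ) : ℚ :=
  ∑ f ∈ (Finset.Nat.antidiagonalTuple k n).filter (fun f => ∀ i, 0 < f i),
    ∏ i, c (f i)

/-- `p̂(m,ℓ) = (1/(am+(b-1)ℓ+1))·C(am+(b-1)ℓ+1, ℓ)·P_c(m,ℓ)`. -/
def phat (a b : ℕ) (c : ℕ → ℚ) (m ℓ : ℕ) : ℚ :=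
  (1 / ((a * m + (b - 1) * ℓ + 1 : ℕ) : ℚ)) *
    (((a * m + (b - 1) * ℓ + 1).choose ℓ : ℕ) : ℚ) * Pc c m ℓ

/-!
By Lagrange inversion, the numbers `F_D(n,k) = D/(an+(b-1)k+D) · C(an+(b-1)k+D, k) · P_c(n,k)`
(with `F_0(n,k) = [n = k = 0]`) are the coefficients of `xⁿtᵏ` in `Y^D`, where
`Y = 1 + t ∑ⱼ cⱼ xʲ Y^(aj+b-1)`. So `p̂ = F_1`, and the claim is that the `d`-th convolution power of
`F_1` is `F_d`.

Lagrange inversion is not needed. The closed forms satisfy, coefficientwise,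
`Y^(D+1) = Y^D + t ∑ⱼ cⱼ xʲ Y^(aj+b-1+D)`: this is a binomial identity once one knows
`n P_c(n,k+1) = (k+1) ∑ⱼ j cⱼ P_c(n-j,k)`, which holds because the parts of a composition play
symmetric roles. Together with `F_0 = 1`, the recurrence forces `F_E * F_D = F_(E+D)`, by induction
on the `t`-degree and then on `E`.
-/

open Finset

namespace Finset.Nat

theorem sum_antidiagonalTuple_succ {M : Type*} [AddCommMonoid M] (k n : ℕ)
    (f : (Fin (k + 1) → ℕ) → M) :
    ∑ x ∈ antidiagonalTuple (k + 1) n, f x =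
      ∑ p ∈ antidiagonal n, ∑ x ∈ antidiagonalTuple k p.2, f (Fin.cons p.1 x) := by
  have h : ∀ d m, antidiagonalTuple d m = finAntidiagonal d m := fun d m => by
    ext; simp [mem_antidiagonalTuple]
  simp only [h]
  rw [finAntidiagonal, finAntidiagonal.aux, sum_disjiUnion]
  simp [finAntidiagonal]

theorem sum_filter_pos_antidiagonalTuple_succ {M : Type*} [AddCommMonoid M] (k n : ℕ)
    (f : (Fin (k + 1) → ℕ) → M) :
    ∑ x ∈ antidiagonalTuple (k + 1) n with ∀ i, 0 < x i, f x =
      ∑ j ∈ Icc 1 n, ∑ x ∈ antidiagonalTuple k (n - j) with ∀ i, 0 < x i, f (Fin.cons j x) := by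
  simp only [sum_filter, sum_antidiagonalTuple_succ, Fin.forall_fin_succ, Fin.cons_zero,
    Fin.cons_succ, ite_and, sum_ite_irrel, sum_const_zero]
  rw [sum_antidiagonal_eq_sum_range_succ_mk, ← sum_filter]
  congr 1
  ext j
  simp only [mem_filter, mem_range, mem_Icc]
  omega

theorem sum_antidiagonal_sum_Icc {M : Type*} [AddCommMonoid M] (n : ℕ) (f : ℕ → ℕ → ℕ → M) :
    ∑ q ∈ antidiagonal n, ∑ j ∈ Icc 1 q.1, f j (q.1 - j) q.2 =
      ∑ j ∈ Icc 1 n, ∑ q ∈ antidiagonal (n - j), f j q.1 q.2 := by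
  rw [sum_comm' (t' := Icc 1 n) (s' := fun j => {q ∈ antidiagonal n | j ≤ q.1})]
  · refine sum_congr rfl fun j hj => ?_
    rw [antidiagonal_filter_le_fst_of_le (mem_Icc.1 hj).2, sum_map]
    simp
  · intro q j
    simp only [HasAntidiagonal.mem_antidiagonal, mem_Icc, mem_filter]
    omega

theorem sum_antidiagonal_ite_fst_eq_zero {M : Type*} [AddCommMonoid M] (n : ℕ) (f : ℕ × ℕ → M) :
    ∑ q ∈ antidiagonal n, (if q.1 = 0 then f q else 0) = f (0, n) := by
  rw [sum_antidiagonal_eq_sum_range_succ_mk]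
  simp

end Finset.Nat

section Convolution

-- `f n k` is read as the coefficient of `xⁿtᵏ`, so `biConv` multiplies bivariate power series.
def biConv {R : Type*} [Semiring R] (f g : ℕ → ℕ → R) (n k : ℕ) : R :=
  ∑ p ∈ antidiagonal k, ∑ q ∈ antidiagonal n, f q.1 p.1 * g q.2 p.2

variable {R : Type*} [CommSemiring R]

def biConvPow (f : ℕ → ℕ → R) (d n k : ℕ) : R :=
  ∑ ℓs ∈ Nat.antidiagonalTuple d k, ∑ ms ∈ Nat.antidiagonalTuple d n, ∏ i, f (ms i) (ℓs i)

theorem biConvPow_zero (f : ℕ → ℕ → R) (n k : ℕ) :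
    biConvPow f 0 n k = if n = 0 ∧ k = 0 then 1 else 0 := by
  rcases n with _ | n <;> rcases k with _ | k <;> simp [biConvPow]

theorem biConvPow_succ (f : ℕ → ℕ → R) (d : ℕ) :
    biConvPow f (d + 1) = biConv f (biConvPow f d) := by
  ext n k
  simp only [biConvPow, biConv, Nat.sum_antidiagonalTuple_succ, Fin.prod_univ_succ,
    Fin.cons_zero, Fin.cons_succ, mul_sum]
  exact sum_congr rfl fun _ _ => sum_comm

end Convolution

section WeightedCompositions

variable (c : ℕ → ℚ)

theorem Pc_zero_right (n : ℕ) : Pc c n 0 = if n = 0 then 1 else 0 := by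
  rcases n with _ | n <;> simp [Pc]

theorem sum_weight_mul_prod_eq (w : ℕ → ℚ) (n k : ℕ) :
    ∑ f ∈ Nat.antidiagonalTuple (k + 1) n with ∀ i, 0 < f i, w (f 0) * ∏ i, c (f i) =
      ∑ j ∈ Icc 1 n, w j * c j * Pc c (n - j) k := by
  simp only [Nat.sum_filter_pos_antidiagonalTuple_succ, Pc, mul_sum, Fin.prod_univ_succ,
    Fin.cons_zero, Fin.cons_succ, mul_assoc]

theorem Pc_succ (n k : ℕ) : Pc c n (k + 1) = ∑ j ∈ Icc 1 n, c j * Pc c (n - j) k := by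
  simpa [Pc] using sum_weight_mul_prod_eq c (fun _ => 1) n k

theorem sum_apply_mul_prod_eq (n k : ℕ) (i j : Fin k) :
    ∑ f ∈ Nat.antidiagonalTuple k n with ∀ i, 0 < f i, (f i : ℚ) * ∏ l, c (f l) =
      ∑ f ∈ Nat.antidiagonalTuple k n with ∀ i, 0 < f i, (f j : ℚ) * ∏ l, c (f l) := by
  set σ := Equiv.swap i j
  refine sum_equiv (σ.arrowCongr (Equiv.refl ℕ)) (fun f => ?_) (fun f _ => ?_)
  · simp only [mem_filter, Nat.mem_antidiagonalTuple, Equiv.arrowCongr_apply, Equiv.coe_refl,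
      Function.comp_apply, id_eq, Equiv.sum_comp, σ.symm.forall_congr_right (q := fun l => 0 < f l)]
  · simp only [Equiv.arrowCongr_apply, Equiv.coe_refl, Function.comp_apply, id_eq, σ,
      Equiv.symm_swap, Equiv.swap_apply_right, Equiv.prod_comp (Equiv.swap i j) fun l => c (f l)]

theorem cast_mul_Pc_succ (n k : ℕ) :
    (n : ℚ) * Pc c n (k + 1) = (k + 1) * ∑ j ∈ Icc 1 n, (j : ℚ) * c j * Pc c (n - j) k := by
  calc (n : ℚ) * Pc c n (k + 1)
      = ∑ f ∈ Nat.antidiagonalTuple (k + 1) n with ∀ i, 0 < f i,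
          ∑ i, (f i : ℚ) * ∏ l, c (f l) := by
        rw [Pc, mul_sum]
        refine sum_congr rfl fun f hf => ?_
        rw [← sum_mul, ← Nat.cast_sum, (Nat.mem_antidiagonalTuple.1 (mem_filter.1 hf).1)]
    _ = ∑ _i : Fin (k + 1), ∑ f ∈ Nat.antidiagonalTuple (k + 1) n with ∀ i, 0 < f i,
          (f 0 : ℚ) * ∏ l, c (f l) := by
        rw [sum_comm]
        exact sum_congr rfl fun i _ => sum_apply_mul_prod_eq c n (k + 1) i 0
    _ = (k + 1) * ∑ j ∈ Icc 1 n, (j : ℚ) * c j * Pc c (n - j) k := by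
        rw [sum_const, card_univ, Fintype.card_fin, nsmul_eq_mul, Nat.cast_succ,
          sum_weight_mul_prod_eq c Nat.cast]

end WeightedCompositions

theorem Nat.cast_choose_succ_right_eq {R : Type*} [CommRing R] (N k : ℕ) :
    (N.choose (k + 1) : R) * (k + 1) = N.choose k * (N - k) := by
  rcases le_or_gt k N with hk | hk
  · have h := congrArg (Nat.cast (R := R)) (Nat.choose_succ_right_eq N k)
    push_cast [Nat.cast_sub hk] at h
    exact h
  · simp [Nat.choose_eq_zero_of_lt hk, Nat.choose_eq_zero_of_lt (Nat.lt_succ_of_lt hk)]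

-- `F_D(n,k)`, the coefficient of `xⁿtᵏ` in `Y^D`; at `D = 0` the closed form would be wrong for
-- `n = k = 0`.
def phatPow (a b : ℕ) (c : ℕ → ℚ) (D n k : ℕ) : ℚ :=
  if D = 0 then if n = 0 ∧ k = 0 then 1 else 0
  else (D : ℚ) / ((a * n + (b - 1) * k + D : ℕ) : ℚ) *
    (((a * n + (b - 1) * k + D).choose k : ℕ) : ℚ) * Pc c n k

section PhatPow

variable (a b : ℕ) (c : ℕ → ℚ)

theorem phatPow_zero (n k : ℕ) : phatPow a b c 0 n k = if n = 0 ∧ k = 0 then 1 else 0 :=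
  if_pos rfl

theorem phatPow_of_ne_zero {D : ℕ} (hD : D ≠ 0) (n k : ℕ) :
    phatPow a b c D n k = (D : ℚ) / ((a * n + (b - 1) * k + D : ℕ) : ℚ) *
      (((a * n + (b - 1) * k + D).choose k : ℕ) : ℚ) * Pc c n k :=
  if_neg hD

theorem phatPow_succ_right (D n k : ℕ) :
    phatPow a b c D n (k + 1) = (D : ℚ) / ((a * n + (b - 1) * (k + 1) + D : ℕ) : ℚ) *
      (((a * n + (b - 1) * (k + 1) + D).choose (k + 1) : ℕ) : ℚ) * Pc c n (k + 1) := by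
  rcases eq_or_ne D 0 with rfl | hD
  · simp [phatPow_zero]
  · exact phatPow_of_ne_zero a b c hD n (k + 1)

theorem phatPow_zero_right (D n : ℕ) : phatPow a b c D n 0 = if n = 0 then 1 else 0 := by
  rcases eq_or_ne D 0 with rfl | hD
  · simp [phatPow_zero]
  · rcases n with _ | n <;> simp [phatPow_of_ne_zero a b c hD, Pc_zero_right, hD]

theorem sum_mul_phatPow_of_ne_zero {D n k : ℕ} (hN : a * n + (b - 1) * (k + 1) + D ≠ 0) :
    ∑ j ∈ Icc 1 n, c j * phatPow a b c (a * j + (b - 1) + D) (n - j) k =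
      ((a * n + (b - 1) * (k + 1) + D).choose k : ℚ) / (a * n + (b - 1) * (k + 1) + D : ℕ) *
        (a * n / (k + 1) + (b - 1 : ℕ) + D) * Pc c n (k + 1) := by
  set B := b - 1
  set N := a * n + B * (k + 1) + D with hNdef
  have hexp : ∀ j ∈ Icc 1 n, a * j + B + D ≠ 0 := fun j hj h0 => by
    obtain rfl : a = 0 := by
      have := Nat.le_mul_of_pos_right a (mem_Icc.1 hj).1
      omega
    simp_all
  have hterm : ∀ j ∈ Icc 1 n, c j * phatPow a b c (a * j + B + D) (n - j) k =
      (N.choose k : ℚ) / N * (a * (j * c j * Pc c (n - j) k) + (B + D) * (c j * Pc c (n - j) k)) := by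
    intro j hj
    have hsplit : a * (n - j) + a * j = a * n := by
      rw [← Nat.mul_add, Nat.sub_add_cancel (mem_Icc.1 hj).2]
    rw [phatPow_of_ne_zero a b c (hexp j hj),
      show a * (n - j) + B * k + (a * j + B + D) = N by rw [hNdef, mul_add_one]; omega]
    push_cast
    ring
  have hweight : ∑ j ∈ Icc 1 n, (j : ℚ) * c j * Pc c (n - j) k = n * Pc c n (k + 1) / (k + 1) := by
    rw [eq_div_iff (by positivity), cast_mul_Pc_succ, mul_comm]
  rw [sum_congr rfl hterm, ← mul_sum, sum_add_distrib, ← mul_sum, ← mul_sum, ← Pc_succ, hweight]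
  ring

theorem phatPow_succ_succ (D n k : ℕ) :
    phatPow a b c (D + 1) n (k + 1) = phatPow a b c D n (k + 1) +
      ∑ j ∈ Icc 1 n, c j * phatPow a b c (a * j + (b - 1) + D) (n - j) k := by
  by_cases hN0 : a * n + (b - 1) * (k + 1) + D = 0
  · have hexp : ∀ j ∈ Icc 1 n, a * j + (b - 1) + D = 0 := fun j hj => by
      have := Nat.mul_le_mul_left a (mem_Icc.1 hj).2
      rw [mul_add_one] at hN0
      omega
    obtain rfl : D = 0 := by omega
    rw [sum_congr rfl fun j hj => by rw [hexp j hj, phatPow_zero], phatPow_succ_right,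
      phatPow_succ_right, Pc_succ, show a * n + (b - 1) * (k + 1) + (0 + 1) = 1 by omega]
    rcases k with _ | k <;> simp [Pc_zero_right, Nat.choose_eq_zero_of_lt]
  rw [phatPow_succ_right, phatPow_succ_right, sum_mul_phatPow_of_ne_zero a b c hN0]
  set N := a * n + (b - 1) * (k + 1) + D with hNdef
  have hk : (k : ℚ) + 1 ≠ 0 := by positivity
  have hchoose : ((N + 1).choose (k + 1) : ℚ) = (N + 1) * N.choose k / (k + 1) := by
    rw [eq_div_iff hk]
    exact_mod_cast (Nat.add_one_mul_choose_eq N k).symm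
  have hchoose' : (N.choose (k + 1) : ℚ) = N.choose k * (N - k) / (k + 1) := by
    rw [eq_div_iff hk, Nat.cast_choose_succ_right_eq]
  have hNq : (N : ℚ) = a * n + (b - 1 : ℕ) * (k + 1) + D := by rw [hNdef]; push_cast; ring
  rw [show a * n + (b - 1) * (k + 1) + (D + 1) = N + 1 by omega, hchoose, hchoose']
  push_cast
  field_simp
  linear_combination (N.choose k : ℚ) * Pc c n (k + 1) * hNq

theorem biConv_phatPow_succ_left (E : ℕ) (g : ℕ → ℕ → ℚ) (n k : ℕ) :
    biConv (phatPow a b c (E + 1)) g n (k + 1) = biConv (phatPow a b c E) g n (k + 1) +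
      ∑ j ∈ Icc 1 n, c j * biConv (phatPow a b c (a * j + (b - 1) + E)) g (n - j) k := by
  simp only [biConv, Nat.sum_antidiagonal_succ (n := k), phatPow_zero_right, phatPow_succ_succ,
    add_mul, sum_add_distrib, sum_mul, mul_sum, add_assoc]
  congr 2
  refine (sum_congr rfl fun p _ => ?_).trans sum_comm
  rw [Nat.sum_antidiagonal_sum_Icc n fun j r s =>
    c j * phatPow a b c (a * j + (b - 1 + E)) r p.1 * g s p.2]
  simp only [mul_assoc]

theorem phatPow_add (E D : ℕ) :
    biConv (phatPow a b c E) (phatPow a b c D) = phatPow a b c (E + D) := by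
  ext n k
  induction k generalizing E D n with
  | zero =>
    simp only [biConv, Nat.antidiagonal_zero, sum_singleton, phatPow_zero_right, ite_mul, one_mul,
      zero_mul, Nat.sum_antidiagonal_ite_fst_eq_zero]
  | succ k ihk =>
    induction E generalizing n with
    | zero =>
      simp only [biConv, phatPow_zero, ite_and, ite_mul, one_mul, zero_mul,
        Nat.sum_antidiagonal_ite_fst_eq_zero, zero_add]
    | succ E ihE =>
      rw [biConv_phatPow_succ_left, ihE, sum_congr rfl fun j _ => by rw [ihk], add_right_comm,
        phatPow_succ_succ]
      simp only [add_assoc]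

theorem phat_eq_phatPow_one : phat a b c = phatPow a b c 1 := by
  ext m ℓ
  simp [phat, phatPow_of_ne_zero]

theorem biConvPow_phat (d : ℕ) : biConvPow (phat a b c) d = phatPow a b c d := by
  induction d with
  | zero =>
    ext n k
    rw [biConvPow_zero, phatPow_zero]
  | succ d ih =>
    rw [biConvPow_succ, ih, phat_eq_phatPow_one, phatPow_add, add_comm]

end PhatPow

theorem phat_dfold_convolution_general_general (a b : ℕ)
    (c : ℕ → ℚ) (d : ℕ) (hd : 1 ≤ d) (n k : ℕ) :
    ∑ ℓs ∈ Finset.Nat.antidiagonalTuple d k,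
      ∑ ms ∈ Finset.Nat.antidiagonalTuple d n,
        ∏ i, phat a b c (ms i) (ℓs i)
    = ((d : ℚ) / ((a * n + (b - 1) * k + d : ℕ) : ℚ)) *
        (((a * n + (b - 1) * k + d).choose k : ℕ) : ℚ) * Pc c n k :=
  (congrFun₂ (biConvPow_phat a b c d) n k).trans (phatPow_of_ne_zero a b c (by omega) n k)

/-- Proposition: `d`-fold convolution formula for general `a` and `b`. -/
theorem phat_dfold_convolution_general (a b : ℕ) (ha : 1 ≤ a) (hb : 1 ≤ b)
    (c : ℕ → ℚ) (d : ℕ) (hd : 1 ≤ d) (n k : ℕ) :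
    ∑ ℓs ∈ Finset.Nat.antidiagonalTuple d k,
      ∑ ms ∈ Finset.Nat.antidiagonalTuple d n,
        ∏ i, phat a b c (ms i) (ℓs i)
    = ((d : ℚ) / ((a * n + (b - 1) * k + d : ℕ) : ℚ)) *
        (((a * n + (b - 1) * k + d).choose k : ℕ) : ℚ) * Pc c n k :=
  phat_dfold_convolution_general_general a b c d hd n k
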